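/- Let f : ℝ^D → ℝ be μ-strongly convex and have L_Lip-Lipschitz continuous gradient with 0 < μ ≤ L_Lip, and let f⋆ = min f. Then for any r ∈ ℝ^D, one gradient-descent-type step with noisy update r⁺ = r − (1/L_Lip)(∇f(r) + e) satisfies f(r⁺) − f⋆ ≤ (1 − μ/L_Lip)(f(r) − f⋆) + ‖e‖²/(2 L_Lip). -/

import Mathlib

/-!
Along the segment from `x` to `x + v`, the Lipschitz bound on the gradient makes `f` minus its
quadratic model antitone, which is the descent lemma `f (x + v) ≤ f x + ⟪∇f x, v⟫ + L/2 ‖v‖²`. At `v = -(∇f r + e)/L` the cross terms `⟪∇f r, e⟫`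
cancel, leaving `f r⁺ ≤ f r - ‖∇f r‖²/(2L) + ‖e‖²/(2L)`. Minimizing the strong-convexity lower
bound over `y` gives the Polyak–Łojasiewicz inequality `2μ (f r - f⋆) ≤ ‖∇f r‖²`, which turns the
guaranteed decrease `‖∇f r‖²/(2L)` into the contraction factor `1 - μ/L`.
-/

open scoped RealInnerProductSpace

variable {E : Type*} [NormedAddCommGroup E] [InnerProductSpace ℝ E] {f : E → ℝ} {g : E → E}

theorem two_mul_sub_le_norm_sq_of_strongly_convex {μ : ℝ} (hμ : 0 < μ) {x y : E}
    (hstrong : f x + ⟪g x, y - x⟫ + μ / 2 * ‖y - x‖ ^ 2 ≤ f y) :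
    2 * μ * (f x - f y) ≤ ‖g x‖ ^ 2 := by
  have hsq : 0 ≤ ‖g x + μ • (y - x)‖ ^ 2 := sq_nonneg _
  rw [norm_add_sq_real, real_inner_smul_right, norm_smul, Real.norm_of_nonneg hμ.le] at hsq
  nlinarith [mul_le_mul_of_nonneg_left hstrong (by positivity : 0 ≤ 2 * μ)]

variable [CompleteSpace E]

theorem hasDerivAt_apply_add_smul (hgrad : ∀ x, HasGradientAt f (g x) x) (x v : E) (t : ℝ) :
    HasDerivAt (fun s : ℝ => f (x + s • v)) ⟪g (x + t • v), v⟫ t := by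
  have hline : HasDerivAt (fun s : ℝ => x + s • v) v t := by
    simpa using ((hasDerivAt_id t).smul_const v).const_add x
  have h := (hgrad (x + t • v)).hasFDerivAt.comp_hasDerivAt t hline
  simp only [InnerProductSpace.toDual_apply_apply] at h
  exact h

theorem apply_add_le_of_lipschitz_gradient {L : ℝ} (hgrad : ∀ x, HasGradientAt f (g x) x)
    (hlip : ∀ x y, ‖g x - g y‖ ≤ L * ‖x - y‖) (x v : E) :
    f (x + v) ≤ f x + ⟪g x, v⟫ + L / 2 * ‖v‖ ^ 2 := by
  let φ : ℝ → ℝ := fun t => f (x + t • v) - t * ⟪g x, v⟫ - L * t ^ 2 / 2 * ‖v‖ ^ 2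
  have hφ : ∀ t, HasDerivAt φ (⟪g (x + t • v), v⟫ - ⟪g x, v⟫ - L * t * ‖v‖ ^ 2) t := by
    intro t
    have hquad := (((hasDerivAt_pow 2 t).const_mul L).div_const 2).mul_const (‖v‖ ^ 2)
    exact (((hasDerivAt_apply_add_smul hgrad x v t).sub
      ((hasDerivAt_id t).mul_const ⟪g x, v⟫)).sub hquad).congr_deriv
      (by norm_num only [one_mul, pow_one]; ring)
  have hφ_nonpos : ∀ t ∈ interior (Set.Icc (0 : ℝ) 1), deriv φ t ≤ 0 := by
    intro t ht
    rw [interior_Icc] at ht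
    have hinc : ⟪g (x + t • v) - g x, v⟫ ≤ L * t * ‖v‖ ^ 2 :=
      calc ⟪g (x + t • v) - g x, v⟫ ≤ ‖g (x + t • v) - g x‖ * ‖v‖ := real_inner_le_norm _ _
        _ ≤ L * ‖x + t • v - x‖ * ‖v‖ := by gcongr; exact hlip _ _
        _ = L * t * ‖v‖ ^ 2 := by simp [norm_smul, abs_of_pos ht.1]; ring
    rw [(hφ t).deriv, ← inner_sub_left]
    linarith
  have hanti : AntitoneOn φ (Set.Icc 0 1) :=
    antitoneOn_of_deriv_nonpos (convex_Icc 0 1)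
      (fun t _ => (hφ t).continuousAt.continuousWithinAt)
      (fun t _ => (hφ t).differentiableAt.differentiableWithinAt) hφ_nonpos
  have h01 := hanti (Set.left_mem_Icc.2 zero_le_one) (Set.right_mem_Icc.2 zero_le_one)
    zero_le_one
  simp [φ] at h01
  linarith

theorem apply_sub_one_div_smul_add_le {L : ℝ} (hgrad : ∀ x, HasGradientAt f (g x) x)
    (hlip : ∀ x y, ‖g x - g y‖ ≤ L * ‖x - y‖) (hL : 0 < L) (x e : E) :
    f (x - (1 / L) • (g x + e)) ≤ f x - ‖g x‖ ^ 2 / (2 * L) + ‖e‖ ^ 2 / (2 * L) := by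
  have h := apply_add_le_of_lipschitz_gradient hgrad hlip x (-((1 / L) • (g x + e)))
  have hquad : ⟪g x, -((1 / L) • (g x + e))⟫ + L / 2 * ‖-((1 / L) • (g x + e))‖ ^ 2
      = ‖e‖ ^ 2 / (2 * L) - ‖g x‖ ^ 2 / (2 * L) := by
    rw [inner_neg_right, norm_neg, real_inner_smul_right, norm_smul, mul_pow, norm_add_sq_real,
      inner_add_right, real_inner_self_eq_norm_sq, Real.norm_eq_abs, sq_abs]
    field_simp
    ring
  rw [← sub_eq_add_neg] at h
  linarith

theorem stmt_15_general {D : ℕ} (f : EuclideanSpace ℝ (Fin D) → ℝ)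
    (g : EuclideanSpace ℝ (Fin D) → EuclideanSpace ℝ (Fin D))
    (μ LL : ℝ) (hμ : 0 < μ) (hμL : μ ≤ LL)
    (hgrad : ∀ x, HasGradientAt f (g x) x)
    (hstrong : ∀ x y, f x + inner ℝ (g x) (y - x) + μ / 2 * ‖y - x‖ ^ 2 ≤ f y)
    (hlip : ∀ x y, ‖g x - g y‖ ≤ LL * ‖x - y‖)
    (fstar : ℝ)
    (hattained : ∃ x, f x = fstar)
    (r : EuclideanSpace ℝ (Fin D)) (e : EuclideanSpace ℝ (Fin D)) :
    f (r - (1 / LL) • (g r + e)) - fstar ≤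
      (1 - μ / LL) * (f r - fstar) + ‖e‖ ^ 2 / (2 * LL) := by
  obtain ⟨xstar, rfl⟩ := hattained
  have hL : 0 < LL := hμ.trans_le hμL
  have hstep := apply_sub_one_div_smul_add_le hgrad hlip hL r e
  have hpl := two_mul_sub_le_norm_sq_of_strongly_convex hμ (hstrong r xstar)
  have hgain : μ / LL * (f r - f xstar) ≤ ‖g r‖ ^ 2 / (2 * LL) := by
    rw [div_mul_eq_mul_div, div_le_div_iff₀ hL (by positivity)]
    nlinarith
  linarith

/-- One noisy gradient step on a `μ`-strongly convex function `f` with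
`L`-Lipschitz gradient: with `r⁺ = r − (1/L)(∇f(r) + e)`,
`f(r⁺) − f⋆ ≤ (1 − μ/L)(f(r) − f⋆) + ‖e‖²/(2L)`. -/
theorem stmt_15 {D : ℕ} (f : EuclideanSpace ℝ (Fin D) → ℝ)
    (g : EuclideanSpace ℝ (Fin D) → EuclideanSpace ℝ (Fin D))
    (μ LL : ℝ) (hμ : 0 < μ) (hμL : μ ≤ LL)
    (hgrad : ∀ x, HasGradientAt f (g x) x)
    (hstrong : ∀ x y, f x + inner ℝ (g x) (y - x) + μ / 2 * ‖y - x‖ ^ 2 ≤ f y)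
    (hlip : ∀ x y, ‖g x - g y‖ ≤ LL * ‖x - y‖)
    (fstar : ℝ) (hfstar : ∀ x, fstar ≤ f x)
    (hattained : ∃ x, f x = fstar)
    (r : EuclideanSpace ℝ (Fin D)) (e : EuclideanSpace ℝ (Fin D)) :
    f (r - (1 / LL) • (g r + e)) - fstar ≤
      (1 - μ / LL) * (f r - fstar) + ‖e‖ ^ 2 / (2 * LL) :=
  stmt_15_general f g μ LL hμ hμL hgrad hstrong hlip fstar hattained r e
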